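/- Let D be a real graded division algebra with degree-preserving involution φ_0 restricting to the conjugation on D_e, and define η : T → {±1} by φ_0(X_t) = η(t) X_t (with the normalizations of the paper). Then for all s, t ∈ T one has η(s t²) = η(s). -/

import Mathlib

variable {G : Type*} [CommGroup G] [DecidableEq G] {D : Type*} [Ring D] [Algebra ℝ D]

/-- A real graded division algebra. -/
def IsGDA (comp : G → Submodule ℝ D) : Prop :=
  DirectSum.IsInternal comp ∧ (1 : D) ∈ comp 1 ∧
    (∀ (g h : G) (a b : D), a ∈ comp g → b ∈ comp h → a * b ∈ comp (g * h)) ∧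
    ∀ (g : G) (a : D), a ∈ comp g → a ≠ 0 → IsUnit a

/-!
Write `X_t X_s X_t = z X_{st²}` with `z` a unit of `D_e`. The word `X_t X_s X_t` is a palindrome,
so `φ` scales it by `η(s) η(t)² = η(s)`, while `φ (z X_{st²}) = η(st²) X_{st²} φ(z)`. Hence
`η(s) z = η(st²) σ(φ z)`, where `σ` is conjugation by `X_{st²}` on `D_e`.

If every `X_u` centralizes `D_e` (the cases `ℝ` and `ℍ`), then `σ = id` and `z` is central in `D_e`;
a nonzero central `c ∈ D_e` with `φ c = -c` cannot exist (in the noncommutative case it would make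
`D_e` commutative), so `η(s) = η(st²)`. If `D_e` is commutative, conjugation by a homogeneous unit
acts on `D_e` as the identity or as `φ`, since it permutes the roots `d, φ d` of each
`x² - (d + φ d) x + d φ d`. Conjugation by `X_{st²}` agrees with conjugation by `X_s`, so either
both centralize `D_e` and `η = δ` on both, or `σ = φ` and `η(s) z = η(st²) z`.
-/

namespace IsGDA

variable {comp : G → Submodule ℝ D}

theorem mul_mem (h : IsGDA comp) {g g' : G} {a b : D} (ha : a ∈ comp g) (hb : b ∈ comp g') :
    a * b ∈ comp (g * g') :=
  h.2.2.1 _ _ _ _ ha hb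

theorem mul_mem_one (h : IsGDA comp) {a b : D} (ha : a ∈ comp 1) (hb : b ∈ comp 1) :
    a * b ∈ comp 1 :=
  one_mul (1 : G) ▸ h.mul_mem ha hb

theorem isUnit (h : IsGDA comp) {g : G} {a : D} (ha : a ∈ comp g) (h0 : a ≠ 0) : IsUnit a :=
  h.2.2.2 _ _ ha h0

theorem inv_mem (h : IsGDA comp) {g : G} {u : Dˣ} (hu : (u : D) ∈ comp g) :
    ((u⁻¹ : Dˣ) : D) ∈ comp g⁻¹ := by
  have hint := h.1
  -- with `u⁻¹ = y + r`, `y` of degree `g⁻¹`, `r u = 1 - y u` lies in `comp 1` and in the other components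
  have hsplit : ((u⁻¹ : Dˣ) : D) ∈ comp g⁻¹ ⊔ ⨆ (k) (_ : k ≠ g⁻¹), comp k := by
    rw [← iSup_split_single, hint.submodule_iSup_eq_top]; trivial
  obtain ⟨y, hy, r, hr, hyr⟩ := Submodule.mem_sup.mp hsplit
  have hr_shift : (⨆ (k) (_ : k ≠ g⁻¹), comp k) ≤
      (⨆ (j) (_ : j ≠ (1 : G)), comp j).comap (LinearMap.mulRight ℝ (u : D)) :=
    iSup₂_le fun k hk x hx => Submodule.mem_iSup_of_mem (k * g) <|
      Submodule.mem_iSup_of_mem (by rwa [ne_eq, mul_eq_one_iff_eq_inv]) (h.mul_mem hx hu)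
  have hyu : y * u ∈ comp 1 := inv_mul_cancel g ▸ h.mul_mem hy hu
  have hru : r * u = 1 - y * u := by
    rw [eq_sub_iff_add_eq', ← add_mul, hyr, Units.inv_mul]
  have hru0 : r * u = 0 := Submodule.disjoint_def.mp (hint.submodule_iSupIndep 1) _
    (hru ▸ Submodule.sub_mem _ h.2.1 hyu) (hr_shift hr)
  rw [← hyr, (u.isUnit.mul_left_eq_zero).mp hru0, add_zero]
  exact hy

theorem mul_inv_mem_one (h : IsGDA comp) {g : G} {a : D} {u : Dˣ} (ha : a ∈ comp g)
    (hu : (u : D) ∈ comp g) : a * ((u⁻¹ : Dˣ) : D) ∈ comp 1 :=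
  mul_inv_cancel g ▸ h.mul_mem ha (h.inv_mem hu)

theorem exists_mul_eq_mul (h : IsGDA comp) {g : G} {u : Dˣ} (hu : (u : D) ∈ comp g)
    {d : D} (hd : d ∈ comp 1) : ∃ e ∈ comp 1, (u : D) * d = e * u :=
  ⟨u * d * ((u⁻¹ : Dˣ) : D), h.mul_inv_mem_one (mul_one g ▸ h.mul_mem hu hd) hu,
    by rw [Units.inv_mul_cancel_right]⟩

end IsGDA

section Intertwines

variable (E : Submodule ℝ D)

def Intertwines (f : D → D) (v : D) : Prop :=
  ∀ d ∈ E, v * d = f d * v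

variable {E}

theorem Intertwines.congr {f g : D → D} {v : D} (hv : Intertwines E f v)
    (hfg : ∀ d ∈ E, f d = g d) : Intertwines E g v :=
  fun d hd => hfg d hd ▸ hv d hd

theorem Intertwines.mul {f g : D → D} {v w : D} (hv : Intertwines E f v) (hw : Intertwines E g w)
    (hg : ∀ d ∈ E, g d ∈ E) : Intertwines E (fun d => f (g d)) (v * w) := fun d hd => by
  rw [mul_assoc, hw d hd, ← mul_assoc, hv _ (hg d hd), mul_assoc]

theorem Intertwines.of_mul_right {f : D → D} {v w : D} (hvw : Intertwines E f (v * w))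
    (hw : Intertwines E id w) (hwu : IsUnit w) : Intertwines E f v := fun d hd => by
  refine hwu.mul_right_cancel ?_
  rw [mul_assoc, show d * w = w * d from (hw d hd).symm, ← mul_assoc, hvw d hd, mul_assoc]

theorem Intertwines.of_mul_left {f : D → D} {v w : D} (hvw : Intertwines E f (v * w))
    (hv : Intertwines E id v) (hvu : IsUnit v) (hf : ∀ d ∈ E, f d ∈ E) :
    Intertwines E f w := fun d hd => by
  refine hvu.mul_left_cancel ?_
  rw [← mul_assoc, hvw d hd, ← mul_assoc, ← mul_assoc, hv _ (hf d hd), id]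

theorem intertwines_id_of_forall_eq_algebraMap
    (hE : ∀ z ∈ E, ∃ r : ℝ, z = algebraMap ℝ D r) (v : D) : Intertwines E id v := fun d hd => by
  obtain ⟨r, rfl⟩ := hE d hd
  exact (Algebra.commutes r v).symm

end Intertwines

-- A group is not the union of two proper subgroups.
theorem AddMonoidHom.eqOn_or_eqOn_of_forall_eq_or_eq {M N : Type*} [AddMonoid M]
    [AddCancelMonoid N] {S : AddSubmonoid M} {f g h : M →+ N}
    (hfgh : ∀ x ∈ S, h x = f x ∨ h x = g x) : Set.EqOn h f S ∨ Set.EqOn h g S := by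
  refine or_iff_not_imp_left.mpr fun hnf y hy => ?_
  obtain ⟨x, hx, hxf⟩ : ∃ x ∈ S, h x ≠ f x := by simpa [Set.EqOn] using hnf
  by_contra hyg
  have hxg : h x = g x := (hfgh x hx).resolve_left hxf
  have hyf : h y = f y := (hfgh y hy).resolve_right hyg
  rcases hfgh (x + y) (S.add_mem hx hy) with hsum | hsum
  · rw [map_add, map_add, hxg, hyf] at hsum
    exact hxf (hxg.trans (add_right_cancel hsum))
  · rw [map_add, map_add, hxg, hyf] at hsum
    exact hyg (hyf.trans (add_left_cancel hsum))

section Involution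

variable {φ : D ≃ₗ[ℝ] D} {E : Submodule ℝ D}

theorem map_one_of_anti (hanti : ∀ x y : D, φ (x * y) = φ y * φ x) : φ 1 = 1 := by
  have h := hanti (φ.symm 1) 1
  rwa [mul_one, φ.apply_symm_apply, mul_one, eq_comm] at h

theorem map_mul_mul_eq_smul (hanti : ∀ x y : D, φ (x * y) = φ y * φ x) {x y : D} {a b : ℝ}
    (hx : φ x = a • x) (hy : φ y = b • y) (hb : b * b = 1) :
    φ (y * x * y) = a • (y * x * y) := by
  rw [hanti, hanti, hx, hy, smul_mul_smul_comm, smul_mul_smul_comm, ← mul_assoc, mul_right_comm,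
    hb, one_mul, ← mul_assoc y x y]

theorem smul_eq_smul_apply_map_of_intertwines (hanti : ∀ x y : D, φ (x * y) = φ y * φ x)
    {f : D → D} {z w : D} {a c : ℝ} (hw : φ w = c • w) (hf : Intertwines E f w) (hwu : IsUnit w)
    (hz : φ z ∈ E) (hzw : φ (z * w) = a • (z * w)) : a • z = c • f (φ z) := by
  refine hwu.mul_right_cancel ?_
  rw [smul_mul_assoc, ← hzw, hanti, hw, smul_mul_assoc, hf _ hz, smul_mul_assoc]

theorem eq_of_smul_eq_smul_map {a b : ℝ} (ha : a = 1 ∨ a = -1) (hb : b = 1 ∨ b = -1) {z : D}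
    (hz : z ≠ 0) (hskew : φ z = -z → z = 0) (h : a • z = b • φ z) : a = b := by
  rcases ha with rfl | rfl <;> rcases hb with rfl | rfl
  all_goals first
    | rfl
    | exact absurd (hskew (by simpa [neg_eq_iff_eq_neg] using h.symm)) hz

theorem eq_zero_of_map_eq_neg (hanti : ∀ x y : D, φ (x * y) = φ y * φ x)
    (hE : ∀ z ∈ E, ∃ r : ℝ, z = algebraMap ℝ D r) {c : D} (hc : c ∈ E) (hφc : φ c = -c) :
    c = 0 := by
  obtain ⟨r, rfl⟩ := hE c hc
  rw [Algebra.algebraMap_eq_smul_one] at hφc ⊢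
  rw [map_smul, map_one_of_anti hanti] at hφc
  have h2 : (2 : ℝ) • (r • (1 : D)) = 0 := by
    rw [two_smul]; exact eq_neg_iff_add_eq_zero.mp hφc
  exact (smul_eq_zero.mp h2).resolve_left two_ne_zero

theorem mul_comm_of_map_eq_neg (hanti : ∀ x y : D, φ (x * y) = φ y * φ x)
    (hmul : ∀ a ∈ E, ∀ b ∈ E, a * b ∈ E)
    (htr : ∀ a ∈ E, ∃ r : ℝ, a + φ a = algebraMap ℝ D r) {c : D} (hc : c ∈ E)
    (hcc : Intertwines E id c) (hcu : IsUnit c) (hφc : φ c = -c) {a b : D} (ha : a ∈ E)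
    (hb : b ∈ E) : a * b = b * a := by
  obtain ⟨p, hp⟩ := htr a ha
  obtain ⟨q, hq⟩ := htr (a * c) (hmul a ha c hc)
  have hca : c * a = a * c := hcc a ha
  have hcb : c * b = b * c := hcc b hb
  -- the trace of `a c` puts `a c` in `ℝ + ℝ c`, so `a c` commutes with `b`
  have hac : a * c + a * c = algebraMap ℝ D q + algebraMap ℝ D p * c := by
    rw [hanti, hφc, eq_sub_of_add_eq' hp, neg_mul, mul_sub, hca, ← Algebra.commutes] at hq
    rw [← hq]
    abel
  have h2 : (2 : ℝ) • ((a * b - b * a) * c) = 0 := by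
    calc (2 : ℝ) • ((a * b - b * a) * c) = (a * c + a * c) * b - b * (a * c + a * c) := by
          rw [two_smul, add_mul, mul_add, mul_assoc a c b, hcb]
          noncomm_ring
      _ = 0 := by
          simp only [hac, Algebra.algebraMap_eq_smul_one, add_mul, mul_add, smul_mul_assoc,
            mul_smul_comm, one_mul, mul_one, hcb, sub_self]
  have h0 := (smul_eq_zero.mp h2).resolve_left two_ne_zero
  rwa [hcu.mul_left_eq_zero, sub_eq_zero] at h0

theorem eq_or_eq_map_of_mul_eq_mul (hcomm : ∀ a ∈ E, ∀ b ∈ E, a * b = b * a)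
    (hunit : ∀ a ∈ E, a ≠ 0 → IsUnit a) {d e v : D} (hd : d ∈ E) (he : e ∈ E)
    (htr : ∃ r : ℝ, d + φ d = algebraMap ℝ D r) (hnorm : ∃ r : ℝ, d * φ d = algebraMap ℝ D r)
    (hv : IsUnit v) (hvd : v * d = e * v) : e = d ∨ e = φ d := by
  obtain ⟨p, hp⟩ := htr
  obtain ⟨q, hq⟩ := hnorm
  rw [Algebra.algebraMap_eq_smul_one] at hp hq
  have hφd : φ d = p • 1 - d := eq_sub_of_add_eq' hp
  have hdd : d * d = p • d - q • 1 := by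
    rw [hφd, mul_sub, mul_smul_comm, mul_one] at hq
    rw [← hq, sub_sub_cancel]
  have hee : e * e = p • e - q • 1 := by
    refine hv.mul_right_cancel ?_
    rw [mul_assoc, ← hvd, ← mul_assoc, ← hvd, mul_assoc, hdd, mul_sub, sub_mul, mul_smul_comm,
      smul_mul_assoc, hvd, mul_smul_comm, smul_mul_assoc, mul_one, one_mul]
  have hfac : (e - d) * (e - φ d) = 0 := by
    have hexp : (e - d) * (e - φ d) =
        (e * e - (p • e - q • 1)) - (d * d - (p • d - q • 1)) + (e * d - d * e) := by
      rw [hφd]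
      simp only [mul_sub, sub_mul, mul_smul_comm, mul_one, smul_sub]
      abel
    rw [hexp, hee, hdd, hcomm e he d hd]
    simp
  rcases eq_or_ne (e - d) 0 with h | h
  · exact Or.inl (sub_eq_zero.mp h)
  · exact Or.inr (sub_eq_zero.mp ((hunit _ (E.sub_mem he hd) h).mul_right_eq_zero.mp hfac))

theorem intertwines_id_or_map (hcomm : ∀ a ∈ E, ∀ b ∈ E, a * b = b * a)
    (hunit : ∀ a ∈ E, a ≠ 0 → IsUnit a) (htr : ∀ d ∈ E, ∃ r : ℝ, d + φ d = algebraMap ℝ D r)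
    (hnorm : ∀ d ∈ E, ∃ r : ℝ, d * φ d = algebraMap ℝ D r) {v : D} (hv : IsUnit v)
    (hvE : ∀ d ∈ E, ∃ e ∈ E, v * d = e * v) : Intertwines E id v ∨ Intertwines E φ v := by
  have key := AddMonoidHom.eqOn_or_eqOn_of_forall_eq_or_eq (S := E.toAddSubmonoid)
    (h := AddMonoidHom.mulLeft v) (f := AddMonoidHom.mulRight v)
    (g := (AddMonoidHom.mulRight v).comp φ.toAddMonoidHom) fun d hd => by
      obtain ⟨e, he, hvd⟩ := hvE d hd
      rcases eq_or_eq_map_of_mul_eq_mul hcomm hunit hd he (htr d hd) (hnorm d hd) hv hvd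
        with rfl | rfl
      · exact Or.inl hvd
      · exact Or.inr hvd
  exact key.imp (fun H d hd => H hd) (fun H d hd => H hd)

theorem Intertwines.mul_mul_of_id_or_map (hφE : ∀ d ∈ E, φ d ∈ E) {f : D → D}
    (hfE : ∀ d ∈ E, f d ∈ E) (hf : ∀ d ∈ E, φ (f (φ d)) = f d) {x y : D}
    (hx : Intertwines E f x) (hy : Intertwines E id y ∨ Intertwines E φ y) :
    Intertwines E f (y * x * y) := by
  rcases hy with hy | hy
  · exact ((hy.mul hx hfE).mul hy fun d hd => hd).congr fun _ _ => rfl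
  · exact ((hy.mul hx hfE).mul hy hφE).congr hf

end Involution

theorem stmt_5_general (comp : G → Submodule ℝ D) (hgda : IsGDA comp)
    (T : Subgroup G) (hT : ∀ g : G, comp g ≠ ⊥ ↔ g ∈ T)
    (X : ↥T → Dˣ) (hX : ∀ t : ↥T, (X t : D) ∈ comp (t : G))
    (φ : D ≃ₗ[ℝ] D)
    (hanti : ∀ x y : D, φ (x * y) = φ y * φ x)
    (hinvol : ∀ x : D, φ (φ x) = x)
    (hgr : ∀ (g : G), ∀ x ∈ comp g, φ x ∈ comp g)
    -- `φ` restricts to the conjugation on `D_e`: real trace and nonnegative real norm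
    (hconj : ∀ z ∈ comp (1 : G),
      (∃ r : ℝ, z + φ z = algebraMap ℝ D r) ∧ ∃ r : ℝ, 0 ≤ r ∧ z * φ z = algebraMap ℝ D r)
    (η : ↥T → ℝ) (hη : ∀ t : ↥T, η t = 1 ∨ η t = -1)
    (hφX : ∀ t : ↥T, φ (X t : D) = η t • (X t : D))
    -- the normalizations: `D_e = ℝ`, or `D_e` noncommutative (≅ ℍ) with the `X_t`
    -- centralizing `D_e`, or `D_e` commutative (≅ ℂ) with `η = δ` on `K`
    (hcase :
      (∀ z ∈ comp (1 : G), ∃ r : ℝ, z = algebraMap ℝ D r) ∨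
      ((∀ (t : ↥T), ∀ z ∈ comp (1 : G), (X t : D) * z = z * (X t : D)) ∧
        ¬(∀ z ∈ comp (1 : G), ∀ w ∈ comp (1 : G), z * w = w * z)) ∨
      ((∀ z ∈ comp (1 : G), ∀ w ∈ comp (1 : G), z * w = w * z) ∧
        ∃ δ : ℝ, (δ = 1 ∨ δ = -1) ∧
          ∀ t : ↥T, (∀ z ∈ comp (1 : G), (X t : D) * z = z * (X t : D)) → η t = δ)) :
    ∀ s t : ↥T, η (s * t * t) = η s := by
  intro s t
  obtain ⟨d₀, -, hd₀⟩ := Submodule.exists_mem_ne_zero_of_ne_bot ((hT 1).mpr T.one_mem)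
  have : Nontrivial D := nontrivial_of_ne d₀ 0 hd₀
  set E := comp 1
  set W := X (s * t * t)
  set z := X t * X s * X t * W⁻¹
  have hzE : (z : D) ∈ E := hgda.mul_inv_mem_one (by
    simpa [mul_comm (t : G) s] using hgda.mul_mem (hgda.mul_mem (hX t) (hX s)) (hX t)) (hX _)
  have hzW : (z : D) * W = X t * X s * X t := by simp [z]
  have hkey : ∀ f, Intertwines E f W → η s • (z : D) = η (s * t * t) • f (φ z) := fun f hf =>
    smul_eq_smul_apply_map_of_intertwines hanti (hφX _) hf W.isUnit (hgr 1 _ hzE) <|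
      hzW ▸ map_mul_mul_eq_smul hanti (hφX s) (hφX t) (by rcases hη t with h | h <;> simp [h])
  have hzW_of : ∀ f, (∀ d ∈ E, f d ∈ E) → (∀ d ∈ E, φ (f (φ d)) = f d) →
      Intertwines E f (X s) → Intertwines E id (X t) ∨ Intertwines E φ (X t) →
      Intertwines E f (z * W) := fun f hfE hf hs ht =>
    hzW ▸ hs.mul_mul_of_id_or_map (hgr 1) hfE hf ht
  have hcentral : (∀ u, Intertwines E id (X u)) →
      (∀ c ∈ E, Intertwines E id c → φ c = -c → c = 0) → η (s * t * t) = η s :=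
    fun hcent hskew => .symm <| eq_of_smul_eq_smul_map (hη s) (hη _) z.ne_zero
      (hskew _ hzE <| (hzW_of id (fun _ => id) (fun d _ => hinvol d) (hcent s) (.inl (hcent t))
        ).of_mul_right (hcent _) W.isUnit) (hkey id (hcent _))
  rcases hcase with hR | ⟨hcent, hnc⟩ | ⟨hcomm, δ, -, hδ⟩
  · exact hcentral (fun u => intertwines_id_of_forall_eq_algebraMap hR _)
      fun c hc _ => eq_zero_of_map_eq_neg hanti hR hc
  · refine hcentral hcent fun c hc hcc hφc => by_contra fun hc0 => hnc fun a ha b hb => ?_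
    exact mul_comm_of_map_eq_neg hanti (fun a ha b hb => hgda.mul_mem_one ha hb)
      (fun d hd => (hconj d hd).1) hc hcc (hgda.isUnit hc hc0) hφc ha hb
  · have hdich : ∀ u, Intertwines E id (X u) ∨ Intertwines E φ (X u) := fun u =>
      intertwines_id_or_map hcomm (fun a ha => hgda.isUnit ha) (fun d hd => (hconj d hd).1)
        (fun d hd => (hconj d hd).2.imp fun _ h => h.2) (X u).isUnit
        fun d hd => hgda.exists_mul_eq_mul (hX u) hd
    have hW : ∀ f, (∀ d ∈ E, f d ∈ E) → (∀ d ∈ E, φ (f (φ d)) = f d) →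
        Intertwines E f (X s) → Intertwines E f W := fun f hfE hf hs =>
      (hzW_of f hfE hf hs (hdich t)).of_mul_left (fun d hd => hcomm _ hzE _ hd) z.isUnit hfE
    rcases hdich s with hs | hs
    · rw [hδ s hs, hδ _ (hW id (fun _ => id) (fun d _ => hinvol d) hs)]
    · have h := hkey φ (hW φ (hgr 1) (fun d _ => hinvol (φ d)) hs)
      rw [hinvol] at h
      exact (smul_left_injective ℝ z.ne_zero h).symm

/-- For a degree-preserving involution `φ₀` of a real graded division algebra
restricting to the conjugation on `D_e` (with the normalizations of the paper:
`X_t` in the centralizer of `D_e` when `D_e ≅ ℍ`, and `η = δ` on `K` when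
`D_e ≅ ℂ`), the function `η : T → {±1}` defined by `φ₀(X_t) = η(t) X_t`
satisfies `η(s t²) = η(s)` for all `s, t ∈ T`. -/
theorem stmt_5 (comp : G → Submodule ℝ D) (hgda : IsGDA comp)
    (hfd : FiniteDimensional ℝ ↥(comp (1 : G)))
    (T : Subgroup G) (hT : ∀ g : G, comp g ≠ ⊥ ↔ g ∈ T)
    (X : ↥T → Dˣ) (hX : ∀ t : ↥T, (X t : D) ∈ comp (t : G))
    (φ : D ≃ₗ[ℝ] D)
    (hanti : ∀ x y : D, φ (x * y) = φ y * φ x)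
    (hinvol : ∀ x : D, φ (φ x) = x)
    (hgr : ∀ (g : G), ∀ x ∈ comp g, φ x ∈ comp g)
    -- `φ` restricts to the conjugation on `D_e`: real trace and nonnegative real norm
    (hconj : ∀ z ∈ comp (1 : G),
      (∃ r : ℝ, z + φ z = algebraMap ℝ D r) ∧ ∃ r : ℝ, 0 ≤ r ∧ z * φ z = algebraMap ℝ D r)
    (η : ↥T → ℝ) (hη : ∀ t : ↥T, η t = 1 ∨ η t = -1)
    (hφX : ∀ t : ↥T, φ (X t : D) = η t • (X t : D))
    -- the normalizations: `D_e = ℝ`, or `D_e` noncommutative (≅ ℍ) with the `X_t`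
    -- centralizing `D_e`, or `D_e` commutative (≅ ℂ) with `η = δ` on `K`
    (hcase :
      (∀ z ∈ comp (1 : G), ∃ r : ℝ, z = algebraMap ℝ D r) ∨
      ((∀ (t : ↥T), ∀ z ∈ comp (1 : G), (X t : D) * z = z * (X t : D)) ∧
        ¬(∀ z ∈ comp (1 : G), ∀ w ∈ comp (1 : G), z * w = w * z)) ∨
      ((∀ z ∈ comp (1 : G), ∀ w ∈ comp (1 : G), z * w = w * z) ∧
        ∃ δ : ℝ, (δ = 1 ∨ δ = -1) ∧
          ∀ t : ↥T, (∀ z ∈ comp (1 : G), (X t : D) * z = z * (X t : D)) → η t = δ)) :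
    ∀ s t : ↥T, η (s * t * t) = η s :=
  stmt_5_general comp hgda T hT X hX φ hanti hinvol hgr hconj η hη hφX hcase
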